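/- Let A ∈ ℝ^{2×3} have singular values σ₁ ≥ σ₂ ≥ 0, and let λ > 0. If σ₁ + σ₂ > λ and σ₁ − σ₂ ≤ λ, then the unique minimizer X* over X ∈ ℝ^{2×3} of the function (1/2)‖A − X‖_F² + λ‖X‖₂ satisfies X*(X*)ᵀ = c² I₂ with c = (σ₁ + σ₂ − λ)/2; in particular both singular values of X* equal c, so X* is a (scaled) orthogonal matrix. -/

import Mathlib

open Matrix

/-- The spectral norm (largest singular value) of a real matrix, defined as the
operator norm of the induced linear map between Euclidean spaces. -/
noncomputable def matrixSpectralNorm {m n : ℕ} (A : Matrix (Fin m) (Fin n) ℝ) : ℝ :=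
  ‖LinearMap.toContinuousLinearMap (Matrix.toEuclideanLin A)‖

/-- The Frobenius norm of a real matrix. -/
noncomputable def frobNorm {m n : ℕ} (A : Matrix (Fin m) (Fin n) ℝ) : ℝ :=
  Real.sqrt (∑ i, ∑ j, (A i j) ^ 2)

/-!
Write `A = U diag(τ) W` with `U` orthogonal and `W Wᵀ = 1`, from the spectral decomposition of
`A Aᵀ`; the trace and determinant of `A Aᵀ` force `{τ₀, τ₁} = {σ₁, σ₂}`. For `X* = c U W` the
residual `G = A - X* = U diag(τ - c) W` has nonnegative weights `τᵢ - c` summing to `λ`, so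
`tr (G Xᵀ) ≤ λ ‖X‖₂` for every `X`, with equality at `X*`: `G / λ` is a subgradient of the spectral
norm at `X*`. Expanding `‖A - X‖_F² = ‖G - (X - X*)‖_F²` then shows that the objective exceeds its
value at `X*` by at least `½ ‖X - X*‖_F²`.
-/

-- `matrixSpectralNorm X` is definitionally `‖X‖` for this norm.
open scoped Matrix.Norms.L2Operator

lemma trace_mul_transpose_self_eq_sum {m n : Type*} [Fintype m] [Fintype n] (M : Matrix m n ℝ) :
    trace (M * Mᵀ) = ∑ i, ∑ j, M i j ^ 2 := by
  simp [trace, mul_apply, sq]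

lemma trace_mul_transpose_self_pos {m n : Type*} [Fintype m] [Fintype n] {M : Matrix m n ℝ}
    (hM : M ≠ 0) : 0 < trace (M * Mᵀ) := by
  refine lt_of_le_of_ne (by rw [trace_mul_transpose_self_eq_sum]; positivity) (Ne.symm ?_)
  simpa [conjTranspose_eq_transpose_of_trivial] using
    (trace_mul_conjTranspose_self_eq_zero_iff (A := M)).not.mpr hM

lemma frobNorm_sq {m n : ℕ} (M : Matrix (Fin m) (Fin n) ℝ) : frobNorm M ^ 2 = trace (M * Mᵀ) := by
  rw [frobNorm, trace_mul_transpose_self_eq_sum]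
  exact Real.sq_sqrt (by positivity)

theorem half_frobNorm_sq_add_lt_of_subgradient {m n : ℕ} {A X₀ X : Matrix (Fin m) (Fin n) ℝ}
    {P : Matrix (Fin m) (Fin n) ℝ → ℝ} (hle : ∀ X, trace ((A - X₀) * Xᵀ) ≤ P X)
    (heq : trace ((A - X₀) * X₀ᵀ) = P X₀) (hX : X ≠ X₀) :
    1 / 2 * frobNorm (A - X₀) ^ 2 + P X₀ < 1 / 2 * frobNorm (A - X) ^ 2 + P X := by
  set G := A - X₀
  have hexpand : frobNorm (A - X) ^ 2
      = trace (G * Gᵀ) - 2 * trace (G * (X - X₀)ᵀ) + trace ((X - X₀) * (X - X₀)ᵀ) := by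
    have hcross : trace ((X - X₀) * Gᵀ) = trace (G * (X - X₀)ᵀ) := by
      rw [← trace_transpose, transpose_mul, transpose_transpose]
    rw [frobNorm_sq, ← sub_sub_sub_cancel_right A X X₀, transpose_sub, Matrix.sub_mul,
      Matrix.mul_sub, Matrix.mul_sub, trace_sub, trace_sub, trace_sub, hcross]
    ring
  have hG : trace (G * (X - X₀)ᵀ) = trace (G * Xᵀ) - trace (G * X₀ᵀ) := by
    rw [transpose_sub, Matrix.mul_sub, trace_sub]
  rw [frobNorm_sq, hexpand, hG]
  linarith [hle X, trace_mul_transpose_self_pos (sub_ne_zero.mpr hX)]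

section Decomposition

variable {m n : Type*} [Fintype m] [DecidableEq m] {U : Matrix m m ℝ} {W : Matrix m n ℝ}

lemma mul_diagonal_mul_sub_smul_mul (τ : m → ℝ) (c : ℝ) :
    U * diagonal τ * W - c • (U * W) = U * diagonal (fun i => τ i - c) * W := by
  have hdiag : diagonal (fun i => τ i - c) = diagonal τ - c • 1 := by
    ext i j; by_cases h : i = j <;> simp [diagonal, one_apply, h]
  rw [hdiag, Matrix.mul_sub, Matrix.sub_mul, Matrix.mul_smul, Matrix.smul_mul, Matrix.mul_one]

variable [Fintype n]

theorem exists_eq_mul_diagonal_mul_of_det_ne_zero (A : Matrix m n ℝ) (hA : (A * Aᵀ).det ≠ 0) :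
    ∃ (U : Matrix m m ℝ) (τ : m → ℝ) (W : Matrix m n ℝ),
      Uᵀ * U = 1 ∧ (∀ i, 0 < τ i) ∧ W * Wᵀ = 1 ∧ A = U * diagonal τ * W := by
  have hP : (A * Aᵀ).PosSemidef := by
    simpa [conjTranspose_eq_transpose_of_trivial] using posSemidef_self_mul_conjTranspose A
  set e := hP.1.eigenvalues
  set U : Matrix m m ℝ := (hP.1.eigenvectorUnitary : Matrix m m ℝ)
  have hU : Uᵀ * U = 1 := by
    simpa [U, star_eq_conjTranspose, conjTranspose_eq_transpose_of_trivial] using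
      Unitary.coe_star_mul_self hP.1.eigenvectorUnitary
  have hspec : A * Aᵀ = U * diagonal e * Uᵀ := by
    conv_lhs => rw [hP.1.spectral_theorem]
    simp [U, e, star_eq_conjTranspose, conjTranspose_eq_transpose_of_trivial]
  have he : ∀ i, 0 < e i := by
    have hprod : ∏ i, e i ≠ 0 := by simpa [hP.1.det_eq_prod_eigenvalues] using hA
    exact fun i =>
      (hP.eigenvalues_nonneg i).lt_of_ne (Finset.prod_ne_zero_iff.mp hprod i (by simp)).symm
  set τ := fun i => √(e i)
  have hτ : ∀ i, 0 < τ i := fun i => Real.sqrt_pos.mpr (he i)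
  refine ⟨U, τ, diagonal τ⁻¹ * Uᵀ * A, hU, hτ, ?_, ?_⟩
  · have hτe : diagonal τ⁻¹ * diagonal e * diagonal τ⁻¹ = 1 := by
      rw [diagonal_mul_diagonal, diagonal_mul_diagonal, ← diagonal_one]
      congr 1; ext i
      have hei : e i = τ i ^ 2 := (Real.sq_sqrt (he i).le).symm
      rw [Pi.inv_apply, hei]
      field_simp [(hτ i).ne']
    calc diagonal τ⁻¹ * Uᵀ * A * (diagonal τ⁻¹ * Uᵀ * A)ᵀ
        = diagonal τ⁻¹ * Uᵀ * (A * Aᵀ) * U * diagonal τ⁻¹ := by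
          simp only [transpose_mul, transpose_transpose, diagonal_transpose, Matrix.mul_assoc]
      _ = diagonal τ⁻¹ * (Uᵀ * U) * diagonal e * (Uᵀ * U) * diagonal τ⁻¹ := by
          rw [hspec]; simp only [Matrix.mul_assoc]
      _ = 1 := by
          rw [hU, Matrix.mul_one, Matrix.mul_one, hτe]
  · have hτinv : diagonal τ * diagonal τ⁻¹ = 1 := by
      rw [diagonal_mul_diagonal', ← diagonal_one]
      congr 1; ext i; exact mul_inv_cancel₀ (hτ i).ne'
    calc A = U * Uᵀ * A := by rw [mul_eq_one_comm.mp hU, Matrix.one_mul]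
      _ = U * (diagonal τ * diagonal τ⁻¹) * Uᵀ * A := by rw [hτinv, Matrix.mul_one]
      _ = U * diagonal τ * (diagonal τ⁻¹ * Uᵀ * A) := by simp only [Matrix.mul_assoc]

lemma mul_diagonal_mul_mul_transpose_self (hW : W * Wᵀ = 1) (τ : m → ℝ) :
    U * diagonal τ * W * (U * diagonal τ * W)ᵀ = U * diagonal (fun i => τ i ^ 2) * Uᵀ := by
  simp only [transpose_mul, diagonal_transpose, Matrix.mul_assoc]
  rw [← Matrix.mul_assoc W, hW, Matrix.one_mul, ← Matrix.mul_assoc (diagonal τ),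
    diagonal_mul_diagonal]
  simp only [sq]

lemma trace_mul_diagonal_mul_mul_transpose_self (hU : Uᵀ * U = 1) (hW : W * Wᵀ = 1)
    (τ : m → ℝ) : trace (U * diagonal τ * W * (U * diagonal τ * W)ᵀ) = ∑ i, τ i ^ 2 := by
  rw [mul_diagonal_mul_mul_transpose_self hW, trace_mul_comm, ← Matrix.mul_assoc, hU,
    Matrix.one_mul, trace_diagonal]

lemma det_mul_diagonal_mul_mul_transpose_self (hU : Uᵀ * U = 1) (hW : W * Wᵀ = 1)
    (τ : m → ℝ) : det (U * diagonal τ * W * (U * diagonal τ * W)ᵀ) = ∏ i, τ i ^ 2 := by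
  have hdetU : det Uᵀ * det U = 1 := by rw [← det_mul, hU, det_one]
  rw [mul_diagonal_mul_mul_transpose_self hW, det_mul, det_mul, det_diagonal]
  linear_combination (∏ i, τ i ^ 2) * hdetU

lemma trace_mul_diagonal_mul_mul_transpose_mul (hU : Uᵀ * U = 1) (hW : W * Wᵀ = 1)
    (d : m → ℝ) : trace (U * diagonal d * W * (U * W)ᵀ) = ∑ i, d i := by
  rw [transpose_mul, Matrix.mul_assoc, ← Matrix.mul_assoc W, hW, Matrix.one_mul, trace_mul_comm,
    ← Matrix.mul_assoc, hU, Matrix.one_mul, trace_diagonal]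

lemma smul_mul_mul_transpose_smul_mul (hU : U * Uᵀ = 1) (hW : W * Wᵀ = 1) (c : ℝ) :
    c • (U * W) * (c • (U * W))ᵀ = c ^ 2 • 1 := by
  rw [transpose_smul, Matrix.smul_mul, Matrix.mul_smul, transpose_mul, Matrix.mul_assoc,
    ← Matrix.mul_assoc W, hW, Matrix.one_mul, hU, smul_smul, sq]

end Decomposition

section SpectralNorm

variable {m n : Type*} [Fintype m] [Fintype n] [DecidableEq m] [DecidableEq n]

lemma l2_opNorm_le_one_of_mul_transpose_eq_one {W : Matrix m n ℝ} (hW : W * Wᵀ = 1) :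
    ‖W‖ ≤ 1 := by
  have h : ‖W‖ * ‖W‖ ≤ 1 := by
    rw [← l2_opNorm_conjTranspose W, ← l2_opNorm_conjTranspose_mul_self,
      conjTranspose_conjTranspose, conjTranspose_eq_transpose_of_trivial, hW, ← diagonal_one,
      l2_opNorm_diagonal]
    exact pi_norm_le_iff_of_nonneg zero_le_one |>.mpr fun _ => by simp
  nlinarith [norm_nonneg W]

lemma diag_le_l2_opNorm (M : Matrix m m ℝ) (i : m) : M i i ≤ ‖M‖ := by
  calc M i i ≤ ‖(EuclideanSpace.equiv m ℝ).symm (M *ᵥ EuclideanSpace.single i 1) i‖ := by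
        simpa [mulVec_single_one] using le_abs_self (M i i)
    _ ≤ ‖(EuclideanSpace.equiv m ℝ).symm (M *ᵥ EuclideanSpace.single i 1)‖ :=
        PiLp.norm_apply_le _ _
    _ ≤ ‖M‖ * ‖EuclideanSpace.single i (1 : ℝ)‖ := M.l2_opNorm_mulVec _
    _ = ‖M‖ := by simp

lemma trace_diagonal_mul_le {d : m → ℝ} (hd : ∀ i, 0 ≤ d i) (M : Matrix m m ℝ) :
    trace (diagonal d * M) ≤ (∑ i, d i) * ‖M‖ := by
  rw [trace, Finset.sum_mul]
  refine Finset.sum_le_sum fun i _ => ?_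
  simpa [diagonal_mul] using mul_le_mul_of_nonneg_left (diag_le_l2_opNorm M i) (hd i)

variable {U : Matrix m m ℝ} {W : Matrix m n ℝ}

lemma trace_mul_diagonal_mul_mul_transpose_le (hU : U * Uᵀ = 1) (hW : W * Wᵀ = 1)
    {d : m → ℝ} (hd : ∀ i, 0 ≤ d i) (X : Matrix m n ℝ) :
    trace (U * diagonal d * W * Xᵀ) ≤ (∑ i, d i) * ‖X‖ := by
  have hnorm : ‖W * Xᵀ * U‖ ≤ ‖X‖ := calc
    ‖W * Xᵀ * U‖ ≤ ‖W‖ * ‖Xᵀ‖ * ‖U‖ := by grw [l2_opNorm_mul, l2_opNorm_mul]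
    _ ≤ 1 * ‖X‖ * 1 := by
      rw [← conjTranspose_eq_transpose_of_trivial, l2_opNorm_conjTranspose]
      gcongr
      exacts [l2_opNorm_le_one_of_mul_transpose_eq_one hW,
        l2_opNorm_le_one_of_mul_transpose_eq_one hU]
    _ = ‖X‖ := by ring
  calc trace (U * diagonal d * W * Xᵀ) = trace (diagonal d * (W * Xᵀ * U)) := by
        rw [Matrix.mul_assoc, Matrix.mul_assoc, trace_mul_comm, Matrix.mul_assoc, Matrix.mul_assoc]
    _ ≤ (∑ i, d i) * ‖W * Xᵀ * U‖ := trace_diagonal_mul_le hd _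
    _ ≤ (∑ i, d i) * ‖X‖ := by gcongr; exact Finset.sum_nonneg fun i _ => hd i

lemma l2_opNorm_smul_mul_le {c : ℝ} (hc : 0 ≤ c) (hU : U * Uᵀ = 1) (hW : W * Wᵀ = 1) :
    ‖c • (U * W)‖ ≤ c := calc
  ‖c • (U * W)‖ ≤ c * (‖U‖ * ‖W‖) := by
    rw [norm_smul, Real.norm_of_nonneg hc]; gcongr; exact l2_opNorm_mul U W
  _ ≤ c * (1 * 1) := by
    gcongr
    exacts [l2_opNorm_le_one_of_mul_transpose_eq_one hU,
      l2_opNorm_le_one_of_mul_transpose_eq_one hW]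
  _ = c := by ring

lemma trace_sub_smul_mul_mul_transpose_le (hU : U * Uᵀ = 1) (hW : W * Wᵀ = 1) {τ : m → ℝ}
    {c : ℝ} (hτ : ∀ i, c ≤ τ i) (X : Matrix m n ℝ) :
    trace ((U * diagonal τ * W - c • (U * W)) * Xᵀ) ≤ (∑ i, (τ i - c)) * ‖X‖ := by
  rw [mul_diagonal_mul_sub_smul_mul]
  exact trace_mul_diagonal_mul_mul_transpose_le hU hW (fun i => sub_nonneg.mpr (hτ i)) X

lemma trace_sub_smul_mul_mul_transpose_smul_mul (hU : Uᵀ * U = 1) (hW : W * Wᵀ = 1)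
    {τ : m → ℝ} {c : ℝ} (hc : 0 ≤ c) (hτ : ∀ i, c ≤ τ i) :
    trace ((U * diagonal τ * W - c • (U * W)) * (c • (U * W))ᵀ)
      = (∑ i, (τ i - c)) * ‖c • (U * W)‖ := by
  have hUU : U * Uᵀ = 1 := mul_eq_one_comm.mp hU
  refine le_antisymm (trace_sub_smul_mul_mul_transpose_le hUU hW hτ _) ?_
  rw [mul_diagonal_mul_sub_smul_mul, transpose_smul, Matrix.mul_smul, trace_smul,
    trace_mul_diagonal_mul_mul_transpose_mul hU hW, smul_eq_mul, mul_comm c]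
  exact mul_le_mul_of_nonneg_left (l2_opNorm_smul_mul_le hc hUU hW)
    (Finset.sum_nonneg fun i _ => sub_nonneg.mpr (hτ i))

end SpectralNorm

lemma eq_and_eq_or_eq_and_eq_of_sq_add_sq_eq {a b s t : ℝ} (ha : 0 ≤ a) (hb : 0 ≤ b)
    (hs : 0 ≤ s) (ht : 0 ≤ t) (hsq : a ^ 2 + b ^ 2 = s ^ 2 + t ^ 2)
    (hprod : (a * b) ^ 2 = (s * t) ^ 2) : (a = s ∧ b = t) ∨ (a = t ∧ b = s) := by
  have hmul : a * b = s * t := by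
    rwa [sq_eq_sq₀ (mul_nonneg ha hb) (mul_nonneg hs ht)] at hprod
  have hadd : a + b = s + t := by
    rw [← sq_eq_sq₀ (add_nonneg ha hb) (add_nonneg hs ht)]
    linear_combination hsq + 2 * hmul
  have hroot : (a - s) * (a - t) = 0 := by linear_combination a * hadd - hmul
  rcases mul_eq_zero.mp hroot with h | h
  · left; constructor <;> linarith
  · right; constructor <;> linarith

theorem prox_spectralNorm_orthogonal_general (A : Matrix (Fin 2) (Fin 3) ℝ) (σ₁ σ₂ lam : ℝ)
    (hord : σ₂ ≤ σ₁)
    (htr : σ₁ ^ 2 + σ₂ ^ 2 = Matrix.trace (A * Aᵀ))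
    (hdet : (σ₁ * σ₂) ^ 2 = (A * Aᵀ).det)
    (hsum : lam < σ₁ + σ₂) (hdiff : σ₁ - σ₂ ≤ lam) :
    ∃ Xstar : Matrix (Fin 2) (Fin 3) ℝ,
      (∀ X : Matrix (Fin 2) (Fin 3) ℝ, X ≠ Xstar →
        (1 / 2) * frobNorm (A - Xstar) ^ 2 + lam * matrixSpectralNorm Xstar
          < (1 / 2) * frobNorm (A - X) ^ 2 + lam * matrixSpectralNorm X) ∧
      Xstar * Xstarᵀ = ((σ₁ + σ₂ - lam) / 2) ^ 2 • (1 : Matrix (Fin 2) (Fin 2) ℝ) := by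
  have hσ₂ : 0 < σ₂ := by linarith
  have hσ₁ : 0 < σ₁ := hσ₂.trans_le hord
  obtain ⟨U, τ, W, hU, hτ, hW, rfl⟩ :=
    exists_eq_mul_diagonal_mul_of_det_ne_zero A (by rw [← hdet]; positivity)
  have hUU : U * Uᵀ = 1 := mul_eq_one_comm.mp hU
  rw [trace_mul_diagonal_mul_mul_transpose_self hU hW, Fin.sum_univ_two] at htr
  rw [det_mul_diagonal_mul_mul_transpose_self hU hW, Fin.prod_univ_two, ← mul_pow] at hdet
  set c := (σ₁ + σ₂ - lam) / 2 with hc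
  have hτσ : τ 0 + τ 1 = σ₁ + σ₂ ∧ ∀ i, σ₂ ≤ τ i := by
    rcases eq_and_eq_or_eq_and_eq_of_sq_add_sq_eq (hτ 0).le (hτ 1).le hσ₁.le hσ₂.le
      htr.symm hdet.symm with ⟨h0, h1⟩ | ⟨h0, h1⟩ <;>
    exact ⟨by linarith, fun i => by fin_cases i <;> simp [h0, h1, hord]⟩
  have hτc : ∀ i, c ≤ τ i := fun i => by linarith [hτσ.2 i]
  have hlam : ∑ i, (τ i - c) = lam := by rw [Fin.sum_univ_two]; linarith [hτσ.1]
  refine ⟨c • (U * W), fun X hX => half_frobNorm_sq_add_lt_of_subgradient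
    (P := fun X => lam * matrixSpectralNorm X) (fun X => ?_) ?_ hX,
    smul_mul_mul_transpose_smul_mul hUU hW c⟩
  · rw [← hlam]; exact trace_sub_smul_mul_mul_transpose_le hUU hW hτc X
  · rw [← hlam]; exact trace_sub_smul_mul_mul_transpose_smul_mul hU hW (by linarith) hτc

/-- Let `A ∈ ℝ^{2×3}` have singular values `σ₁ ≥ σ₂ ≥ 0` (characterized by
`σ₁² + σ₂² = tr(AAᵀ)` and `σ₁²σ₂² = det(AAᵀ)`), and let `λ > 0`. If `σ₁ + σ₂ > λ` and
`σ₁ - σ₂ ≤ λ`, then the unique minimizer `X*` of `X ↦ (1/2)‖A - X‖_F² + λ‖X‖₂` satisfies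
`X* (X*)ᵀ = c² I₂` with `c = (σ₁ + σ₂ - λ)/2`, i.e. `X*` is a scaled orthogonal matrix. -/
theorem prox_spectralNorm_orthogonal (A : Matrix (Fin 2) (Fin 3) ℝ) (σ₁ σ₂ lam : ℝ)
    (hord : σ₂ ≤ σ₁) (hpos : 0 ≤ σ₂)
    (htr : σ₁ ^ 2 + σ₂ ^ 2 = Matrix.trace (A * Aᵀ))
    (hdet : (σ₁ * σ₂) ^ 2 = (A * Aᵀ).det)
    (hlam : 0 < lam) (hsum : lam < σ₁ + σ₂) (hdiff : σ₁ - σ₂ ≤ lam) :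
    ∃ Xstar : Matrix (Fin 2) (Fin 3) ℝ,
      (∀ X : Matrix (Fin 2) (Fin 3) ℝ, X ≠ Xstar →
        (1 / 2) * frobNorm (A - Xstar) ^ 2 + lam * matrixSpectralNorm Xstar
          < (1 / 2) * frobNorm (A - X) ^ 2 + lam * matrixSpectralNorm X) ∧
      Xstar * Xstarᵀ = ((σ₁ + σ₂ - lam) / 2) ^ 2 • (1 : Matrix (Fin 2) (Fin 2) ℝ) :=
  prox_spectralNorm_orthogonal_general A σ₁ σ₂ lam hord htr hdet hsum hdiff
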